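/- arXiv:math/0605038 — 2 statements merged into one kernel-verified Lean document; each statement's English description precedes it below -/
import Mathlib

section
/- Define on the space of positive definite symmetric n×n real matrices the distance d(Z₁, Z₂) := |log λ_max(B₂B₁⁻¹)ᵀ(B₂B₁⁻¹)| + |log λ_min(B₂B₁⁻¹)ᵀ(B₂B₁⁻¹)| where Zᵢ = BᵢᵀBᵢ. Then for any invertible n×n matrix A, d(AᵀZ₁A, AᵀZ₂A) = d(Z₁, Z₂). -/
/-!
With `Q := B₁ A C₁⁻¹` one has `QᵀQ = C₁⁻ᵀ (Aᵀ Z₁ A) C₁⁻¹ = 1`, so `Q` is orthogonal, and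
`B₂ B₁⁻¹ Q = B₂ A C₁⁻¹` has the same Gram matrix `C₁⁻ᵀ (Aᵀ Z₂ A) C₁⁻¹` as `C₂ C₁⁻¹`.
Hence the Gram matrix of `C₂ C₁⁻¹` is the orthogonal conjugate `Qᵀ G Q` of the Gram matrix `G`
of `B₂ B₁⁻¹`, and the two have the same spectrum, in particular the same extreme eigenvalues.
-/

open Matrix

theorem gramHerm {n : ℕ} (M : Matrix (Fin n) (Fin n) ℝ) : (Mᵀ * M).IsHermitian := by
  simpa [Matrix.conjTranspose_eq_transpose_of_trivial] using Matrix.isHermitian_conjTranspose_mul_self M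

noncomputable def lamMax {n : ℕ} (M : Matrix (Fin n) (Fin n) ℝ) : ℝ :=
  ⨆ i, (gramHerm M).eigenvalues i

noncomputable def lamMin {n : ℕ} (M : Matrix (Fin n) (Fin n) ℝ) : ℝ :=
  ⨅ i, (gramHerm M).eigenvalues i

namespace Matrix

variable {l m n R : Type*} [Fintype l] [Fintype m] [CommRing R]

theorem transpose_mul_self_mul (M : Matrix l m R) (N : Matrix m n R) :
    (M * N)ᵀ * (M * N) = Nᵀ * (Mᵀ * M) * N := by
  simp only [transpose_mul, Matrix.mul_assoc]

variable [Fintype n] [DecidableEq n]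

theorem transpose_mul_self_mul_inv_eq_one {M : Matrix m n R} {C : Matrix n n R}
    (h : Mᵀ * M = Cᵀ * C) (hC : IsUnit C.det) : (M * C⁻¹)ᵀ * (M * C⁻¹) = 1 := by
  rw [transpose_mul_self_mul, h, ← transpose_mul_self_mul, mul_nonsing_inv C hC,
    transpose_one, Matrix.one_mul]

theorem spectrum_transpose_mul_mul_eq {Q : Matrix n n R} (hQ : Qᵀ * Q = 1) (S : Matrix n n R) :
    spectrum R (Qᵀ * S * Q) = spectrum R S :=
  spectrum.units_conjugate (u := ⟨Qᵀ, Q, hQ, mul_eq_one_comm.mp hQ⟩)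

end Matrix

theorem lamMax_eq_sSup_spectrum {n : ℕ} (M : Matrix (Fin n) (Fin n) ℝ) :
    lamMax M = sSup (spectrum ℝ (Mᵀ * M)) := by
  rw [(gramHerm M).spectrum_real_eq_range_eigenvalues, sSup_range, lamMax]

theorem lamMin_eq_sInf_spectrum {n : ℕ} (M : Matrix (Fin n) (Fin n) ℝ) :
    lamMin M = sInf (spectrum ℝ (Mᵀ * M)) := by
  rw [(gramHerm M).spectrum_real_eq_range_eigenvalues, sInf_range, lamMin]

theorem stmt_3_general {n : ℕ}
    (Z₁ Z₂ A B₁ B₂ C₁ C₂ : Matrix (Fin n) (Fin n) ℝ)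
    (hB₁ : IsUnit B₁.det)
    (hC₁ : IsUnit C₁.det)
    (hfB₁ : Z₁ = B₁ᵀ * B₁) (hfB₂ : Z₂ = B₂ᵀ * B₂)
    (hfC₁ : Aᵀ * Z₁ * A = C₁ᵀ * C₁) (hfC₂ : Aᵀ * Z₂ * A = C₂ᵀ * C₂) :
    |Real.log (lamMax (C₂ * C₁⁻¹))| + |Real.log (lamMin (C₂ * C₁⁻¹))| =
      |Real.log (lamMax (B₂ * B₁⁻¹))| + |Real.log (lamMin (B₂ * B₁⁻¹))| := by
  set Q := B₁ * A * C₁⁻¹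
  have hQ : Qᵀ * Q = 1 :=
    transpose_mul_self_mul_inv_eq_one (by rw [transpose_mul_self_mul, ← hfB₁, hfC₁]) hC₁
  have hgram : (C₂ * C₁⁻¹)ᵀ * (C₂ * C₁⁻¹) = Qᵀ * ((B₂ * B₁⁻¹)ᵀ * (B₂ * B₁⁻¹)) * Q := by
    have hB₂Q : B₂ * B₁⁻¹ * Q = B₂ * A * C₁⁻¹ := by
      simp only [Q, Matrix.mul_assoc, nonsing_inv_mul_cancel_left B₁ _ hB₁]
    rw [← transpose_mul_self_mul, hB₂Q, transpose_mul_self_mul (B₂ * A),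
      transpose_mul_self_mul B₂, ← hfB₂, hfC₂, ← transpose_mul_self_mul]
  have hspec : spectrum ℝ ((C₂ * C₁⁻¹)ᵀ * (C₂ * C₁⁻¹)) =
      spectrum ℝ ((B₂ * B₁⁻¹)ᵀ * (B₂ * B₁⁻¹)) := by
    rw [hgram, spectrum_transpose_mul_mul_eq hQ]
  rw [lamMax_eq_sSup_spectrum, lamMin_eq_sInf_spectrum, hspec, ← lamMax_eq_sSup_spectrum,
    ← lamMin_eq_sInf_spectrum]

/-- The distance `d(Z₁,Z₂) = |log λ_max (B₂B₁⁻¹)ᵀ(B₂B₁⁻¹)| + |log λ_min (B₂B₁⁻¹)ᵀ(B₂B₁⁻¹)|`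
computed from factorizations `Zᵢ = BᵢᵀBᵢ` is invariant under the congruence action
`Z ↦ AᵀZA` of `GL(n,ℝ)`, for any choice of factorizations. -/
theorem stmt_3 {n : ℕ} [Nonempty (Fin n)]
    (Z₁ Z₂ A B₁ B₂ C₁ C₂ : Matrix (Fin n) (Fin n) ℝ)
    (hZ₁ : Z₁.PosDef) (hZ₂ : Z₂.PosDef)
    (hA : IsUnit A.det) (hB₁ : IsUnit B₁.det) (hB₂ : IsUnit B₂.det)
    (hC₁ : IsUnit C₁.det) (hC₂ : IsUnit C₂.det)
    (hfB₁ : Z₁ = B₁ᵀ * B₁) (hfB₂ : Z₂ = B₂ᵀ * B₂)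
    (hfC₁ : Aᵀ * Z₁ * A = C₁ᵀ * C₁) (hfC₂ : Aᵀ * Z₂ * A = C₂ᵀ * C₂) :
    |Real.log (lamMax (C₂ * C₁⁻¹))| + |Real.log (lamMin (C₂ * C₁⁻¹))| =
      |Real.log (lamMax (B₂ * B₁⁻¹))| + |Real.log (lamMin (B₂ * B₁⁻¹))| :=
  stmt_3_general Z₁ Z₂ A B₁ B₂ C₁ C₂ hB₁ hC₁ hfB₁ hfB₂ hfC₁ hfC₂
end

section
/- Let (X, d) be a metric space, g : X → X an isometry, Z, Z' ∈ X, and n ≥ 1 a real constant. Suppose that for every k ≥ 1, d(Z, Z') + Σ_{i=0}^{k−1} d(gⁱ Z', g^{i+1} Z') ≤ n·d(Z, g^k Z'). Then for every B > 0 there exists k such that d(Z', g Z') ≤ n·d(Z, g Z) + B. -/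
lemma iter_isom {X : Type*} [MetricSpace X] (g : X → X) (hg : Isometry g) :
    ∀ i : ℕ, Isometry (g^[i]) := by
  intro i
  induction i with
  | zero => simpa using isometry_id
  | succ i ih => rw [Function.iterate_succ]; exact ih.comp hg

lemma iter_dist_le {X : Type*} [MetricSpace X] (g : X → X) (hg : Isometry g)
    (Z : X) : ∀ k : ℕ, dist Z (g^[k] Z) ≤ k * dist Z (g Z) := by
  intro k
  induction k with
  | zero => simp
  | succ k ih =>
    calc dist Z (g^[k+1] Z) ≤ dist Z (g Z) + dist (g Z) (g^[k+1] Z) := dist_triangle _ _ _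
    _ = dist Z (g Z) + dist Z (g^[k] Z) := by
        rw [Function.iterate_succ_apply', hg.dist_eq]
    _ ≤ dist Z (g Z) + k * dist Z (g Z) := by linarith
    _ = (k+1 : ℕ) * dist Z (g Z) := by push_cast; ring

theorem stmt_8 {X : Type*} [MetricSpace X]
    (g : X → X) (hg : Isometry g) (Z Z' : X) (n : ℝ) (hn : 1 ≤ n)
    (h : ∀ k : ℕ, 1 ≤ k →
      dist Z Z' + ∑ i ∈ Finset.range k, dist (g^[i] Z') (g^[i + 1] Z') ≤
        n * dist Z (g^[k] Z')) :
    ∀ B > (0 : ℝ), ∃ k : ℕ, dist Z' (g Z') ≤ n * dist Z (g Z) + B := by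
  intro B hB
  set A := dist Z (g Z)
  set D := dist Z' (g Z')
  set C := dist Z Z'
  obtain ⟨m, hm⟩ := exists_nat_ge ((n - 1) * C / B)
  set k := max m 1 with hk
  have hk1 : 1 ≤ k := le_max_right _ _
  have hkR : (1 : ℝ) ≤ (k : ℝ) := by exact_mod_cast hk1
  have hkpos : (0 : ℝ) < k := by linarith
  have hmk : (m : ℝ) ≤ k := by exact_mod_cast le_max_left m 1
  have hkB : (n - 1) * C ≤ k * B := by
    have := (div_le_iff₀ hB).mp (hm.trans hmk)
    linarith
  have hsum : ∑ i ∈ Finset.range k, dist (g^[i] Z') (g^[i + 1] Z') = k * D := by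
    rw [Finset.sum_congr rfl (fun i _ => ?_), Finset.sum_const, Finset.card_range,
      nsmul_eq_mul]
    rw [Function.iterate_succ_apply, (iter_isom g hg i).dist_eq]
  have h1 := h k hk1
  rw [hsum] at h1
  have h2 : dist Z (g^[k] Z') ≤ k * A + C := by
    calc dist Z (g^[k] Z') ≤ dist Z (g^[k] Z) + dist (g^[k] Z) (g^[k] Z') :=
          dist_triangle _ _ _
    _ ≤ k * A + C := by
        have := iter_dist_le g hg Z k
        have h3 : dist (g^[k] Z) (g^[k] Z') = C := (iter_isom g hg k).dist_eq _ _
        linarith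
  have hn2 : n * dist Z (g^[k] Z') ≤ n * (k * A + C) := by
    apply mul_le_mul_of_nonneg_left h2 (by linarith)
  refine ⟨k, ?_⟩
  have key : (k : ℝ) * D ≤ k * (n * A + B) := by nlinarith
  have := le_of_mul_le_mul_left (by linarith [key] : (k:ℝ) * D ≤ k * (n * A + B)) hkpos
  linarith
end
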